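/- arXiv:1409.6242 — 2 statements merged into one kernel-verified Lean document; each statement's English description precedes it below -/
import Mathlib

section
/- Let a_z ∈ M_d(ℂ) be normal with an eigenvalue λ₁ ≠ 0 whose eigenspace is one-dimensional and such that |μ| < |λ₁| for every other eigenvalue μ of a_z; let P be the orthogonal projection onto the λ₁-eigenspace. Let U ∈ M_d(ℂ) be unitary with U·a_z·U† = a_z, let a_x ∈ M_d(ℂ) be arbitrary, and set a_y := U·a_x·U†. Then there exist C ≥ 0 and r ∈ [0,1) such that ‖λ₁^{−2m}·(a_z^m·a_x·a_z^m − a_z^m·a_y·a_z^m)‖ ≤ C·r^m for all m; in particular the renormalized operators ã_x^{(m)} := λ₁^{−2m} a_z^m a_x a_z^m and ã_y^{(m)} := λ₁^{−2m} a_z^m a_y a_z^m converge to the common limit P·a_x·P. -/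
open Matrix Filter

noncomputable section

attribute [local instance] Matrix.normedAddCommGroup

/-- `μ` is an eigenvalue of the matrix `a`. -/
def HasEigen {d : ℕ} (a : Matrix (Fin d) (Fin d) ℂ) (μ : ℂ) : Prop :=
  ∃ v : Fin d → ℂ, v ≠ 0 ∧ a.mulVec v = μ • v

/-!
Put `A = lam⁻¹ • az`. Normality of `az` makes the orthogonal projection `P` onto the dominant
eigenline satisfy `P * az = az * P = lam • P`, so `E = A - P` is orthogonal to `P` on both sides
and `A ^ m = P + E ^ m` for `m ≥ 1`. A nonzero eigenvalue of `E` is `μ / lam` for an eigenvalue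
`μ ≠ lam` of `az`, so the spectral radius of `E` is `< 1` and Gelfand's formula
gives `‖E ^ m‖ ≤ C * r ^ m` with `r < 1`; hence `A ^ m * X * A ^ m` converges to `P * X * P`
exponentially fast. Finally `U` commutes with `az`, hence with `P`, and since `P` has rank one,
`P * X * P` is a multiple of `P`; therefore `P * (U * X * Uᴴ) * P = P * X * P`.
-/

open scoped NNReal ENNReal

theorem IsIdempotentElem.add_pow_of_mul_eq_zero {R : Type*} [Semiring R] {p e : R}
    (hp : IsIdempotentElem p) (hpe : p * e = 0) (hep : e * p = 0) {m : ℕ} (hm : m ≠ 0) :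
    (p + e) ^ m = p + e ^ m := by
  induction m with
  | zero => exact absurd rfl hm
  | succ k ih =>
    rcases eq_or_ne k 0 with rfl | hk
    · simp
    · have hekp : e ^ k * p = 0 := by
        obtain ⟨j, rfl⟩ := Nat.exists_eq_succ_of_ne_zero hk
        rw [pow_succ, mul_assoc, hep, mul_zero]
      rw [pow_succ, ih hk, add_mul, mul_add, mul_add, hp.eq, hpe, hekp, ← pow_succ]
      abel

theorem smul_pow_mul_mul_smul_pow {R A : Type*} [CommSemiring R] [Semiring A] [Algebra R A]
    (c : R) (a x : A) (m : ℕ) :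
    (c • a) ^ m * x * (c • a) ^ m = c ^ (2 * m) • (a ^ m * x * a ^ m) := by
  rw [smul_pow, smul_mul_assoc, smul_mul_assoc, mul_smul_comm, smul_smul, ← pow_add, two_mul]

theorem tendsto_of_norm_sub_le_mul_pow {E : Type*} [SeminormedAddCommGroup E] {f : ℕ → E}
    {a : E} {C r : ℝ} (hr0 : 0 ≤ r) (hr1 : r < 1) (h : ∀ m, ‖f m - a‖ ≤ C * r ^ m) :
    Tendsto f atTop (nhds a) :=
  tendsto_iff_norm_sub_tendsto_zero.mpr <| squeeze_zero (fun _ => norm_nonneg _) h <| by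
    simpa using (tendsto_pow_atTop_nhds_zero_of_lt_one hr0 hr1).const_mul C

theorem exists_norm_pow_le_mul_pow_of_spectralRadius_lt_one {A : Type*} [NormedRing A]
    [NormedAlgebra ℂ A] [CompleteSpace A] {a : A} (h : spectralRadius ℂ a < 1) :
    ∃ C r : ℝ, 0 < r ∧ r < 1 ∧ ∀ m : ℕ, ‖a ^ m‖ ≤ C * r ^ m := by
  obtain ⟨r, har, hr1⟩ := ENNReal.lt_iff_exists_nnreal_btwn.mp h
  have hr0 : 0 < r := ENNReal.coe_pos.mp (bot_le.trans_lt har)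
  have hev : ∀ᶠ n : ℕ in atTop, ‖a ^ n‖ ≤ 1 * ‖(r : ℝ) ^ n‖ := by
    filter_upwards [(spectrum.gelfand_formula a).eventually_lt_const har,
      eventually_ne_atTop 0] with n hn hn0
    rw [one_div, ENNReal.rpow_inv_lt_iff (by positivity), ENNReal.rpow_natCast] at hn
    rw [one_mul, Real.norm_of_nonneg (by positivity), ← coe_nnnorm]
    exact_mod_cast hn.le
  obtain ⟨C, hC⟩ := (Asymptotics.isBigO_nat_atTop_iff fun n hn =>
    absurd hn (pow_ne_zero n (NNReal.coe_ne_zero.mpr hr0.ne'))).mp (.of_bound 1 hev)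
  refine ⟨C, r, hr0, by exact_mod_cast hr1, fun m => ?_⟩
  simpa [norm_pow] using hC m

theorem exists_norm_add_pow_mul_mul_add_pow_sub_le {R : Type*} [NormedRing R] {p e : R}
    (hp : IsIdempotentElem p) (hpe : p * e = 0) (hep : e * p = 0) {C r : ℝ} (hr0 : 0 ≤ r)
    (hr1 : r ≤ 1) (he : ∀ m : ℕ, ‖e ^ m‖ ≤ C * r ^ m) (x : R) :
    ∃ D : ℝ, ∀ m : ℕ, ‖(p + e) ^ m * x * (p + e) ^ m - p * x * p‖ ≤ D * r ^ m := by
  have hC : 0 ≤ C := by simpa using (norm_nonneg _).trans (he 0)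
  refine ⟨‖x - p * x * p‖ + (2 * ‖p‖ * ‖x‖ * C + C ^ 2 * ‖x‖), fun m => ?_⟩
  rcases eq_or_ne m 0 with rfl | hm
  · simpa using le_add_of_nonneg_right (a := ‖x - p * x * p‖) (by positivity)
  have hrm : r ^ m ≤ 1 := pow_le_one₀ hr0 hr1
  have hCr : 0 ≤ C * r ^ m := by positivity
  calc ‖(p + e) ^ m * x * (p + e) ^ m - p * x * p‖
      = ‖p * x * e ^ m + e ^ m * x * p + e ^ m * x * e ^ m‖ := by
        rw [hp.add_pow_of_mul_eq_zero hpe hep hm]; noncomm_ring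
    _ ≤ ‖p‖ * ‖x‖ * ‖e ^ m‖ + ‖e ^ m‖ * ‖x‖ * ‖p‖ + ‖e ^ m‖ * ‖x‖ * ‖e ^ m‖ :=
        norm_add₃_le.trans (by gcongr <;> exact norm_mul₃_le)
    _ ≤ ‖p‖ * ‖x‖ * (C * r ^ m) + C * r ^ m * ‖x‖ * ‖p‖ + C * r ^ m * ‖x‖ * (C * r ^ m) := by
        gcongr <;> exact he m
    _ ≤ (‖x - p * x * p‖ + (2 * ‖p‖ * ‖x‖ * C + C ^ 2 * ‖x‖)) * r ^ m := by
        have : C * r ^ m * ‖x‖ * (C * r ^ m) ≤ C ^ 2 * ‖x‖ * r ^ m := by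
          have := mul_le_mul_of_nonneg_left hrm (by positivity : 0 ≤ C ^ 2 * ‖x‖ * r ^ m)
          nlinarith
        nlinarith [mul_nonneg (norm_nonneg (x - p * x * p)) (pow_nonneg hr0 m)]

namespace Matrix

variable {n : Type*} [Fintype n]

-- The right-hand side is the ℓ∞ operator norm, see `Matrix.linfty_opNorm_def`.
theorem norm_le_sup_sum_nnnorm {α : Type*} [NormedAddCommGroup α] (A : Matrix n n α) :
    ‖A‖ ≤ ((Finset.univ : Finset n).sup fun i => ∑ j, ‖A i j‖₊ : ℝ≥0) := by
  refine (norm_le_iff (by positivity)).mpr fun i j => ?_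
  have hij : ‖A i j‖₊ ≤ ∑ k, ‖A i k‖₊ :=
    Finset.single_le_sum (f := fun k => ‖A i k‖₊) (fun k _ => zero_le) (Finset.mem_univ j)
  exact_mod_cast hij.trans (Finset.le_sup (f := fun i => ∑ k, ‖A i k‖₊) (Finset.mem_univ i))

theorem exists_norm_add_pow_mul_mul_add_pow_sub_le [DecidableEq n] {P E : Matrix n n ℂ}
    (hP : IsIdempotentElem P) (hPE : P * E = 0) (hEP : E * P = 0)
    (hE : ∀ μ ∈ spectrum ℂ E, ‖μ‖ < 1) (X : Matrix n n ℂ) :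
    ∃ C : ℝ, 0 ≤ C ∧ ∃ r : ℝ, 0 ≤ r ∧ r < 1 ∧
      ∀ m : ℕ, ‖(P + E) ^ m * X * (P + E) ^ m - P * X * P‖ ≤ C * r ^ m := by
  rcases isEmpty_or_nonempty n with hn | hn
  · exact ⟨0, le_rfl, 0, le_rfl, one_pos, fun m => by
      simp [Subsingleton.elim _ (0 : Matrix n n ℂ)]⟩
  -- Gelfand's formula needs a submultiplicative norm: argue in the ℓ∞ operator norm,
  -- which dominates the entrywise norm.
  let instR : NormedRing (Matrix n n ℂ) := Matrix.linftyOpNormedRing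
  let _ : NormedAlgebra ℂ (Matrix n n ℂ) := Matrix.linftyOpNormedAlgebra
  have : @CompleteSpace _ instR.toUniformSpace := FiniteDimensional.complete ℂ _
  have hρ : spectralRadius ℂ E < 1 := by
    simpa using spectrum.spectralRadius_lt_of_forall_lt E (r := 1) fun z hz => by
      exact_mod_cast hE z hz
  obtain ⟨C, r, hr0, hr1, hEm⟩ := exists_norm_pow_le_mul_pow_of_spectralRadius_lt_one hρ
  obtain ⟨D, hD⟩ :=
    _root_.exists_norm_add_pow_mul_mul_add_pow_sub_le hP hPE hEP hr0.le hr1.le hEm X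
  refine ⟨D, ?_, r, hr0.le, hr1, fun m => (norm_le_sup_sum_nnnorm _).trans ?_⟩
  · simpa using (norm_nonneg _).trans (hD 0)
  · exact (linfty_opNorm_def _).symm.le.trans (hD m)

open scoped ComplexOrder in
theorem conjTranspose_mulVec_eq_zero_of_isStarNormal {𝕜 : Type*} [RCLike 𝕜]
    {N : Matrix n n 𝕜} (hN : IsStarNormal N) {v : n → 𝕜} (hv : N *ᵥ v = 0) : Nᴴ *ᵥ v = 0 := by
  rw [← dotProduct_star_self_eq_zero, star_mulVec, conjTranspose_conjTranspose,
    ← dotProduct_mulVec, mulVec_mulVec, ← star_eq_conjTranspose, ← hN.star_comm_self,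
    ← mulVec_mulVec, hv, mulVec_zero, dotProduct_zero]

theorem conjTranspose_mulVec_eq_star_smul_of_isStarNormal [DecidableEq n] {𝕜 : Type*}
    [RCLike 𝕜] {a : Matrix n n 𝕜} (ha : IsStarNormal a) {μ : 𝕜} {v : n → 𝕜}
    (hv : a *ᵥ v = μ • v) : aᴴ *ᵥ v = star μ • v := by
  have hN : IsStarNormal (a - μ • 1) :=
    Commute.isStarNormal_sub (by simpa using (Commute.one_right a).smul_right (star μ))
  have h := conjTranspose_mulVec_eq_zero_of_isStarNormal hN (v := v)
    (by simp [sub_mulVec, smul_mulVec, hv])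
  simpa [sub_mulVec, smul_mulVec, sub_eq_zero] using h

theorem mul_eq_smul_of_mulVec_eq {R : Type*} [CommRing R] {a P : Matrix n n R} {lam : R}
    (hP : P * P = P) (h : ∀ v, P *ᵥ v = v → a *ᵥ v = lam • v) : a * P = lam • P :=
  ext_iff_mulVec.mpr fun v => by
    rw [← mulVec_mulVec, h _ (by rw [mulVec_mulVec, hP]), smul_mulVec]

theorem mul_eq_smul_of_isStarNormal [DecidableEq n] {𝕜 : Type*} [RCLike 𝕜]
    {a P : Matrix n n 𝕜} {lam : 𝕜} (ha : IsStarNormal a) (hP : P * P = P) (hPH : Pᴴ = P)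
    (h : ∀ v, P *ᵥ v = v → a *ᵥ v = lam • v) : P * a = lam • P := by
  have hstar : aᴴ * P = star lam • P := mul_eq_smul_of_mulVec_eq hP fun v hv =>
    conjTranspose_mulVec_eq_star_smul_of_isStarNormal ha (h v hv)
  simpa [hPH] using congrArg conjTranspose hstar

theorem commute_of_commute_of_mulVec_eq_iff {K : Type*} [CommRing K] [StarRing K]
    {a P V : Matrix n n K} {lam : K} (hP : P * P = P) (hPH : Pᴴ = P)
    (hPrange : ∀ v, a *ᵥ v = lam • v ↔ P *ᵥ v = v) (hV : Commute V a) (hV' : Commute Vᴴ a) :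
    Commute P V := by
  have preserve : ∀ W : Matrix n n K, Commute W a → P * W * P = W * P := fun W hW =>
    ext_iff_mulVec.mpr fun v => by
      have hPv : a *ᵥ (P *ᵥ v) = lam • P *ᵥ v := (hPrange _).mpr (by rw [mulVec_mulVec, hP])
      have haWPv : a *ᵥ (W *ᵥ P *ᵥ v) = lam • W *ᵥ P *ᵥ v := by
        rw [mulVec_mulVec, ← hW.eq, ← mulVec_mulVec, hPv, mulVec_smul]
      simp only [← mulVec_mulVec, (hPrange _).mp haWPv]
  have h := congrArg conjTranspose (preserve _ hV')
  simp only [conjTranspose_mul, conjTranspose_conjTranspose, hPH, ← mul_assoc] at h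
  rw [Commute, SemiconjBy, ← preserve _ hV, h]

theorem exists_mul_mul_eq_smul_of_rank_eq_one {K : Type*} [Field K] {P : Matrix n n K}
    (hP : P.rank = 1) (X : Matrix n n K) : ∃ t : K, P * X * P = t • P := by
  obtain ⟨⟨v, hv⟩, -, hspan⟩ := finrank_eq_one_iff'.mp hP
  have hrange : ∀ w, ∃ c : K, c • v = P *ᵥ w := fun w => by
    obtain ⟨c, hc⟩ := hspan ⟨P *ᵥ w, w, rfl⟩
    exact ⟨c, congrArg Subtype.val hc⟩
  obtain ⟨u, rfl⟩ := hv
  simp only [mulVecLin_apply] at hrange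
  obtain ⟨t, ht⟩ := hrange (X *ᵥ P *ᵥ u)
  refine ⟨t, ext_iff_mulVec.mpr fun w => ?_⟩
  obtain ⟨s, hs⟩ := hrange w
  rw [← mulVec_mulVec, ← mulVec_mulVec, ← hs, mulVec_smul, mulVec_smul, ← ht, smul_mulVec, ← hs,
    smul_comm]

theorem mul_units_conj_mul_eq_of_rank_eq_one {K : Type*} [Field K] [DecidableEq n]
    {P : Matrix n n K} (hP : P.rank = 1) {u : (Matrix n n K)ˣ}
    (hPu : Commute P (u : Matrix n n K)) (X : Matrix n n K) :
    P * (u * X * (↑u⁻¹ : Matrix n n K)) * P = P * X * P := by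
  obtain ⟨t, ht⟩ := exists_mul_mul_eq_smul_of_rank_eq_one hP X
  calc P * (u * X * (↑u⁻¹ : Matrix n n K)) * P = u * (P * X * P) * (↑u⁻¹ : Matrix n n K) := by
        simp only [mul_assoc, ← hPu.units_inv_right.eq]
        rw [← mul_assoc P, hPu.eq]
        simp only [mul_assoc]
    _ = P * X * P := by
        rw [ht, mul_smul_comm, smul_mul_assoc, ← hPu.eq, mul_assoc, Units.mul_inv, mul_one]

end Matrix

theorem hasEigen_iff_mem_spectrum {d : ℕ} {a : Matrix (Fin d) (Fin d) ℂ} {μ : ℂ} :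
    HasEigen a μ ↔ μ ∈ spectrum ℂ a := by
  rw [← Matrix.spectrum_toLin', ← Module.End.hasEigenvalue_iff_mem_spectrum,
    Module.End.hasEigenvalue_iff, Submodule.ne_bot_iff]
  simp only [Module.End.mem_eigenspace_iff, Matrix.toLin'_apply, HasEigen]
  exact ⟨fun ⟨v, hv, h⟩ => ⟨v, h, hv⟩, fun ⟨v, h, hv⟩ => ⟨v, hv, h⟩⟩

theorem norm_lt_one_of_mem_spectrum_smul_sub {d : ℕ} {a P : Matrix (Fin d) (Fin d) ℂ} {lam : ℂ}
    (hlam0 : lam ≠ 0) (hdom : ∀ μ : ℂ, HasEigen a μ → μ ≠ lam → ‖μ‖ < ‖lam‖)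
    (hfix : ∀ v, a *ᵥ v = lam • v → P *ᵥ v = v) (hPE : P * (lam⁻¹ • a - P) = 0) {μ : ℂ}
    (hμ : μ ∈ spectrum ℂ (lam⁻¹ • a - P)) : ‖μ‖ < 1 := by
  obtain ⟨v, hv0, hv⟩ := hasEigen_iff_mem_spectrum.mpr hμ
  rcases eq_or_ne μ 0 with rfl | hμ0
  · simp
  have hPv : P *ᵥ v = 0 := by
    simpa [← mulVec_mulVec, hv, mulVec_smul, hμ0] using congrArg (· *ᵥ v) hPE
  have hav : a *ᵥ v = (lam * μ) • v := by
    rw [sub_mulVec, hPv, sub_zero, smul_mulVec] at hv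
    rw [mul_smul, ← hv, smul_smul, mul_inv_cancel₀ hlam0, one_smul]
  have hne : lam * μ ≠ lam := fun h => hv0 <| by
    rw [h] at hav
    rw [← hfix v hav, hPv]
  have h := hdom _ ⟨v, hv0, hav⟩ hne
  rw [norm_mul] at h
  exact (mul_lt_iff_lt_one_right (norm_pos_iff.mpr hlam0)).mp h

theorem buffering_common_limit_general {d : ℕ}
    (az P U ax : Matrix (Fin d) (Fin d) ℂ) (lam : ℂ)
    (hnormal : IsStarNormal az)
    (hlam0 : lam ≠ 0)
    (hdom : ∀ μ : ℂ, HasEigen az μ → μ ≠ lam → ‖μ‖ < ‖lam‖)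
    (hP2 : P * P = P) (hPH : Pᴴ = P) (hrank : P.rank = 1)
    (hPrange : ∀ v : Fin d → ℂ, az.mulVec v = lam • v ↔ P.mulVec v = v)
    (hU : Uᴴ * U = 1) (hU' : U * Uᴴ = 1)
    (hUaz : U * az * Uᴴ = az)
    (ay : Matrix (Fin d) (Fin d) ℂ) (hay : ay = U * ax * Uᴴ) :
    (∃ C : ℝ, 0 ≤ C ∧ ∃ r : ℝ, 0 ≤ r ∧ r < 1 ∧
        ∀ m : ℕ, ‖(lam ^ (2 * m))⁻¹ •
            (az ^ m * ax * az ^ m - az ^ m * ay * az ^ m)‖ ≤ C * r ^ m)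
    ∧ Tendsto (fun m : ℕ => (lam ^ (2 * m))⁻¹ • (az ^ m * ax * az ^ m)) atTop
        (nhds (P * ax * P))
    ∧ Tendsto (fun m : ℕ => (lam ^ (2 * m))⁻¹ • (az ^ m * ay * az ^ m)) atTop
        (nhds (P * ax * P)) := by
  have hPaz : P * az = lam • P :=
    Matrix.mul_eq_smul_of_isStarNormal hnormal hP2 hPH fun v => (hPrange v).mpr
  have hazP : az * P = lam • P := Matrix.mul_eq_smul_of_mulVec_eq hP2 fun v => (hPrange v).mpr
  set E : Matrix (Fin d) (Fin d) ℂ := lam⁻¹ • az - P with hE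
  have hPE : P * E = 0 := by simp [hE, mul_sub, hPaz, smul_smul, hlam0, hP2]
  have hEP : E * P = 0 := by simp [hE, sub_mul, hazP, smul_smul, hlam0, hP2]
  have hrescale : ∀ (m : ℕ) (X : Matrix (Fin d) (Fin d) ℂ),
      (lam ^ (2 * m))⁻¹ • (az ^ m * X * az ^ m) = (P + E) ^ m * X * (P + E) ^ m := fun m X => by
    rw [hE, add_sub_cancel, smul_pow_mul_mul_smul_pow, inv_pow]
  have hbound := Matrix.exists_norm_add_pow_mul_mul_add_pow_sub_le hP2 hPE hEP
    fun μ => norm_lt_one_of_mem_spectrum_smul_sub hlam0 hdom (fun v => (hPrange v).mp) hPE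
  have hlimit : ∀ X, Tendsto (fun m : ℕ => (lam ^ (2 * m))⁻¹ • (az ^ m * X * az ^ m)) atTop
      (nhds (P * X * P)) := fun X => by
    obtain ⟨C, -, r, hr0, hr1, h⟩ := hbound X
    exact tendsto_of_norm_sub_le_mul_pow hr0 hr1 fun m => hrescale m X ▸ h m
  let u : (Matrix (Fin d) (Fin d) ℂ)ˣ := ⟨U, Uᴴ, hU', hU⟩
  have huaz : Commute (u : Matrix (Fin d) (Fin d) ℂ) az := (Units.mul_inv_eq_iff_eq_mul u).mp hUaz
  have hPu : Commute P (u : Matrix (Fin d) (Fin d) ℂ) :=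
    Matrix.commute_of_commute_of_mulVec_eq_iff hP2 hPH hPrange huaz huaz.units_inv_left
  have hPyP : P * ay * P = P * ax * P :=
    hay ▸ Matrix.mul_units_conj_mul_eq_of_rank_eq_one hrank hPu ax
  refine ⟨?_, hlimit ax, hPyP ▸ hlimit ay⟩
  obtain ⟨C, hC, r, hr0, hr1, h⟩ := hbound (ax - ay)
  refine ⟨C, hC, r, hr0, hr1, fun m => ?_⟩
  have hPdP : P * (ax - ay) * P = 0 := by rw [mul_sub, sub_mul, hPyP, sub_self]
  rw [← sub_mul, ← mul_sub, hrescale]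
  simpa [hPdP] using h m

/-- Under z-buffering, if `az` is normal with a nondegenerate dominant eigenvalue `lam` ≠ 0
    (with rank-one orthogonal spectral projection `P`), `U` is unitary with `U·az·U† = az`,
    and `ay = U·ax·U†`, then the renormalized operators
    `ã_x^{(m)} = lam⁻²ᵐ azᵐ ax azᵐ` and `ã_y^{(m)} = lam⁻²ᵐ azᵐ ay azᵐ`
    become exponentially close and converge to the common limit `P·ax·P`. -/
theorem buffering_common_limit {d : ℕ}
    (az P U ax : Matrix (Fin d) (Fin d) ℂ) (lam : ℂ)
    (hnormal : IsStarNormal az)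
    (hlam0 : lam ≠ 0) (hlam : HasEigen az lam)
    (hdom : ∀ μ : ℂ, HasEigen az μ → μ ≠ lam → ‖μ‖ < ‖lam‖)
    (hP2 : P * P = P) (hPH : Pᴴ = P) (hrank : P.rank = 1)
    (hPrange : ∀ v : Fin d → ℂ, az.mulVec v = lam • v ↔ P.mulVec v = v)
    (hU : Uᴴ * U = 1) (hU' : U * Uᴴ = 1)
    (hUaz : U * az * Uᴴ = az)
    (ay : Matrix (Fin d) (Fin d) ℂ) (hay : ay = U * ax * Uᴴ) :
    (∃ C : ℝ, 0 ≤ C ∧ ∃ r : ℝ, 0 ≤ r ∧ r < 1 ∧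
        ∀ m : ℕ, ‖(lam ^ (2 * m))⁻¹ •
            (az ^ m * ax * az ^ m - az ^ m * ay * az ^ m)‖ ≤ C * r ^ m)
    ∧ Tendsto (fun m : ℕ => (lam ^ (2 * m))⁻¹ • (az ^ m * ax * az ^ m)) atTop
        (nhds (P * ax * P))
    ∧ Tendsto (fun m : ℕ => (lam ^ (2 * m))⁻¹ • (az ^ m * ay * az ^ m)) atTop
        (nhds (P * ax * P)) :=
  buffering_common_limit_general az P U ax lam hnormal hlam0 hdom hP2 hPH hrank hPrange hU hU' hUaz
    ay hay

end
end

section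
/- Let a_z ∈ M_d(ℂ) be normal with an eigenvalue λ₁ ≠ 0 whose eigenspace is one-dimensional and such that |μ| < |λ₁| for every other eigenvalue μ; let P be the orthogonal projection onto the λ₁-eigenspace. Let U ∈ M_d(ℂ) be unitary with U·a_z·U† = a_z, let a_x ∈ M_d(ℂ) satisfy P·a_x·P ≠ 0, and set a_y := U·a_x·U†. Then for every Θ ∈ ℝ, the renormalized measurement operator λ₁^{−2m}·[cos(Θ/2)·(σ_x ⊗ (a_z^m a_x a_z^m)) − sin(Θ/2)·(σ_y ⊗ (a_z^m a_y a_z^m))] converges as m → ∞ to the nonzero product operator U_Θ ⊗ (P·a_x·P), where U_Θ = σ_x·(cos(Θ/2)·I₂ − i sin(Θ/2)·σ_z). -/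
open Matrix Filter Kronecker

noncomputable section

attribute [local instance] Matrix.normedAddCommGroup

/-- Pauli matrix σ_x. -/
def σx : Matrix (Fin 2) (Fin 2) ℂ := !![0, 1; 1, 0]
/-- Pauli matrix σ_y. -/
def σy : Matrix (Fin 2) (Fin 2) ℂ := !![0, -Complex.I; Complex.I, 0]
/-- Pauli matrix σ_z. -/
def σz : Matrix (Fin 2) (Fin 2) ℂ := !![1, 0; 0, -1]

/-- `U_Θ = σ_x·(cos(Θ/2)·I₂ − i sin(Θ/2)·σ_z)`. -/
def UΘ (Θ : ℝ) : Matrix (Fin 2) (Fin 2) ℂ :=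
  σx * ((Real.cos (Θ / 2) : ℂ) • (1 : Matrix (Fin 2) (Fin 2) ℂ)
    - (Complex.I * (Real.sin (Θ / 2) : ℂ)) • σz)

/-!
Put `C = λ⁻¹ a_z`. Normality makes the `λ`-eigenprojection `P` commute with `a_z`, so
`C = P + R` with `P R = R P = 0`, whence `Cᵐ = P + Rᵐ`. Every eigenvalue of `R` has modulus
`< 1` by the spectral gap, so `Rᵐ → 0` by Gelfand's formula and
`λ⁻²ᵐ a_zᵐ X a_zᵐ → P X P` for every `X`. As `U` commutes with `a_z`, it preserves the
eigenspace and commutes with `P`; as `P` has rank one, `P a_x P` is a multiple of `P`.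
Together these give `P a_y P = P a_x P`, and the two Pauli terms recombine into
`(cos(Θ/2) σ_x − sin(Θ/2) σ_y) ⊗ P a_x P = U_Θ ⊗ P a_x P`.
-/

open scoped Topology

theorem commute_of_mul_mul_eq {M : Type*} [Monoid M] {a u v : M} (hvu : v * u = 1)
    (h : u * a * v = a) : Commute a u ∧ Commute a v := by
  constructor
  · calc a * u = u * a * (v * u) := by rw [← mul_assoc, h]
      _ = u * a := by rw [hvu, mul_one]
  · calc a * v = v * u * a * v := by rw [hvu, one_mul]
      _ = v * a := by rw [mul_assoc v u a, mul_assoc, h]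

theorem add_pow_eq_add_pow_of_mul_eq_zero {R : Type*} [Ring R] {p r : R}
    (hp : IsIdempotentElem p) (hpr : p * r = 0) (hrp : r * p = 0) {m : ℕ} (hm : m ≠ 0) :
    (p + r) ^ m = p + r ^ m := by
  obtain ⟨k, rfl⟩ := Nat.exists_eq_succ_of_ne_zero hm
  induction k with
  | zero => simp
  | succ k ih =>
    rw [pow_succ, ih k.succ_ne_zero, add_mul, mul_add, mul_add, hp.eq, hpr, pow_succ r (k + 1),
      pow_succ, mul_assoc, hrp, mul_zero, add_zero, zero_add]

theorem mul_conj_mul_eq_of_commute {R A : Type*} [CommSemiring R] [Semiring A] [Algebra R A]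
    {p x u v : A} {β : R} (hpxp : p * x * p = β • p) (hu : Commute u p) (hv : Commute v p)
    (huv : u * v = 1) : p * (u * x * v) * p = p * x * p :=
  calc p * (u * x * v) * p = u * (p * x * p) * v := by
        simp only [mul_assoc, hv.eq]; rw [← mul_assoc p u, ← hu.eq, mul_assoc]
    _ = β • (p * (u * v)) := by rw [hpxp, mul_smul_comm, smul_mul_assoc, hu.eq, mul_assoc]
    _ = p * x * p := by rw [huv, mul_one, hpxp]

theorem Matrix.conjTranspose_mul_eq_zero_of_isStarNormal {n p R : Type*} [Fintype n]
    [PartialOrder R] [NonUnitalRing R] [StarRing R] [StarOrderedRing R] [NoZeroDivisors R]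
    {A : Matrix n n R} (hA : IsStarNormal A) {B : Matrix n p R} (h : A * B = 0) :
    Aᴴ * B = 0 := by
  rw [← self_mul_conjTranspose_mul_eq_zero, ← star_eq_conjTranspose, ← hA.star_comm_self.eq,
    Matrix.mul_assoc, h, Matrix.mul_zero]

theorem Matrix.exists_mul_mul_eq_smul_of_rank_eq_one_s5 {n K : Type*} [Fintype n] [Field K]
    {P : Matrix n n K} (hrank : P.rank = 1) (X : Matrix n n K) : ∃ β : K, P * X * P = β • P := by
  obtain ⟨⟨v, u, rfl⟩, -, hspan⟩ := finrank_eq_one_iff'.mp hrank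
  have hcoord : ∀ w, ∃ c : K, c • P *ᵥ u = P *ᵥ w := fun w => by
    obtain ⟨c, hc⟩ := hspan ⟨P *ᵥ w, w, rfl⟩
    exact ⟨c, congrArg Subtype.val hc⟩
  obtain ⟨β, hβ⟩ := hcoord (X *ᵥ P *ᵥ u)
  refine ⟨β, ext_iff_mulVec.mpr fun w => ?_⟩
  obtain ⟨c, hc⟩ := hcoord w
  rw [← mulVec_mulVec, ← mulVec_mulVec, ← hc, mulVec_smul, mulVec_smul, ← hβ, smul_mulVec, ← hc,
    smul_comm]

theorem Matrix.sub_kronecker {l m n p α : Type*} [NonUnitalNonAssocRing α]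
    (A₁ A₂ : Matrix l m α) (B : Matrix n p α) : (A₁ - A₂) ⊗ₖ B = A₁ ⊗ₖ B - A₂ ⊗ₖ B := by
  ext ⟨_, _⟩ ⟨_, _⟩
  simp [sub_mul]

theorem Matrix.kronecker_ne_zero {l m n p α : Type*} [MulZeroClass α] [NoZeroDivisors α]
    {A : Matrix l m α} {B : Matrix n p α} (hA : A ≠ 0) (hB : B ≠ 0) : A ⊗ₖ B ≠ 0 := by
  obtain ⟨i₁, j₁, hA⟩ : ∃ i j, A i j ≠ 0 := by simpa [← Matrix.ext_iff] using hA
  obtain ⟨i₂, j₂, hB⟩ : ∃ i j, B i j ≠ 0 := by simpa [← Matrix.ext_iff] using hB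
  exact fun h => mul_ne_zero hA hB (by simpa using congrFun (congrFun h (i₁, i₂)) (j₁, j₂))

theorem Continuous.matrix_kronecker {X l m n p R : Type*} [TopologicalSpace X]
    [TopologicalSpace R] [Mul R] [ContinuousMul R] {A : X → Matrix l m R} {B : X → Matrix n p R}
    (hA : Continuous A) (hB : Continuous B) : Continuous fun x => A x ⊗ₖ B x :=
  continuous_pi fun _ => continuous_pi fun _ => (hA.matrix_elem _ _).mul (hB.matrix_elem _ _)

theorem tendsto_pow_atTop_nhds_zero_of_spectrum_norm_lt_one {A : Type*} [NormedRing A]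
    [NormedAlgebra ℂ A] [CompleteSpace A] {a : A} (ha : ∀ z ∈ spectrum ℂ a, ‖z‖ < 1) :
    Tendsto (fun n : ℕ => a ^ n) atTop (𝓝 0) := by
  nontriviality A
  have hrad : spectralRadius ℂ a < 1 := by
    simpa using spectrum.spectralRadius_lt_of_forall_lt a (r := 1) fun z hz => mod_cast ha z hz
  obtain ⟨r, hr, hr1⟩ := ENNReal.lt_iff_exists_nnreal_btwn.mp hrad
  have hbound : ∀ᶠ n : ℕ in atTop, ‖a ^ n‖ ≤ (r : ℝ) ^ n := by
    have hgelfand := spectrum.pow_nnnorm_pow_one_div_tendsto_nhds_spectralRadius a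
    filter_upwards [hgelfand.eventually_lt_const hr, eventually_gt_atTop 0] with n hn hn0
    rw [one_div, ENNReal.rpow_inv_lt_iff (by positivity), ENNReal.rpow_natCast] at hn
    exact_mod_cast hn.le
  exact squeeze_zero_norm' hbound
    (tendsto_pow_atTop_nhds_zero_of_lt_one r.coe_nonneg (by exact_mod_cast hr1))

theorem Matrix.hasEigen_of_mem_spectrum {d : ℕ} {B : Matrix (Fin d) (Fin d) ℂ} {z : ℂ}
    (hz : z ∈ spectrum ℂ B) : HasEigen B z := by
  rw [← Matrix.spectrum_toLin', ← Module.End.hasEigenvalue_iff_mem_spectrum] at hz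
  obtain ⟨v, hv⟩ := hz.exists_hasEigenvector
  exact ⟨v, hv.2, by simpa using hv.apply_eq_smul⟩

theorem Matrix.tendsto_pow_atTop_nhds_zero_of_hasEigen {d : ℕ} (B : Matrix (Fin d) (Fin d) ℂ)
    (hB : ∀ μ : ℂ, HasEigen B μ → ‖μ‖ < 1) :
    Tendsto (fun n : ℕ => B ^ n) atTop (𝓝 0) := by
  -- any submultiplicative norm will do; the `ℓ∞` operator norm induces the product topology
  let instRing : NormedRing (Matrix (Fin d) (Fin d) ℂ) := Matrix.linftyOpNormedRing
  let _ : NormedAlgebra ℂ (Matrix (Fin d) (Fin d) ℂ) := Matrix.linftyOpNormedAlgebra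
  have : @CompleteSpace _ instRing.toUniformSpace := FiniteDimensional.complete ℂ _
  exact tendsto_pow_atTop_nhds_zero_of_spectrum_norm_lt_one fun z hz =>
    hB z (Matrix.hasEigen_of_mem_spectrum hz)

theorem tendsto_inv_pow_two_mul_smul_pow_mul_mul_pow {𝕜 A : Type*} [Field 𝕜] [Ring A]
    [Algebra 𝕜 A] [TopologicalSpace A] [IsTopologicalRing A] {c : 𝕜} {a p : A}
    (h : Tendsto (fun m : ℕ => (c ^ m)⁻¹ • a ^ m) atTop (𝓝 p)) (x : A) :
    Tendsto (fun m : ℕ => (c ^ (2 * m))⁻¹ • (a ^ m * x * a ^ m)) atTop (𝓝 (p * x * p)) :=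
  ((h.mul_const x).mul h).congr fun m => by
    rw [two_mul, pow_add, mul_inv, ← smul_smul, smul_mul_assoc, smul_mul_assoc, mul_smul_comm]

section Eigenprojection

variable {d : ℕ} {az P : Matrix (Fin d) (Fin d) ℂ} {lam : ℂ}

theorem mul_eigenprojection (hP2 : P * P = P)
    (hPrange : ∀ v : Fin d → ℂ, az *ᵥ v = lam • v ↔ P *ᵥ v = v) : az * P = lam • P :=
  ext_iff_mulVec.mpr fun w => by
    rw [← mulVec_mulVec, (hPrange _).mpr (by rw [mulVec_mulVec, hP2]), smul_mulVec]

open scoped ComplexOrder in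
theorem eigenprojection_mul (hnormal : IsStarNormal az) (hPH : Pᴴ = P) (hP2 : P * P = P)
    (hPrange : ∀ v : Fin d → ℂ, az *ᵥ v = lam • v ↔ P *ᵥ v = v) : P * az = lam • P := by
  have hshift : IsStarNormal (az - lam • 1) :=
    Commute.isStarNormal_sub (by simpa using (Commute.one_right az).smul_right (star lam))
  have hker : (az - lam • 1) * P = 0 := by
    rw [sub_mul, mul_eigenprojection hP2 hPrange, smul_mul_assoc, one_mul, sub_self]
  have hadj : azᴴ * P = star lam • P := by
    simpa [sub_mul, sub_eq_zero] using conjTranspose_mul_eq_zero_of_isStarNormal hshift hker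
  simpa [hPH] using congrArg conjTranspose hadj

theorem eigenprojection_mul_mul_of_commute (hP2 : P * P = P)
    (hPrange : ∀ v : Fin d → ℂ, az *ᵥ v = lam • v ↔ P *ᵥ v = v) {A : Matrix (Fin d) (Fin d) ℂ}
    (hA : Commute az A) : P * A * P = A * P := by
  have hAP : az * (A * P) = lam • (A * P) := by
    rw [← mul_assoc, hA.eq, mul_assoc, mul_eigenprojection hP2 hPrange, mul_smul_comm]
  exact ext_iff_mulVec.mpr fun w => by
    rw [mul_assoc, ← mulVec_mulVec, (hPrange _).mp (by rw [mulVec_mulVec, hAP, smul_mulVec])]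

theorem commute_eigenprojection (hPH : Pᴴ = P) (hP2 : P * P = P)
    (hPrange : ∀ v : Fin d → ℂ, az *ᵥ v = lam • v ↔ P *ᵥ v = v) {A : Matrix (Fin d) (Fin d) ℂ}
    (hA : Commute az A) (hA' : Commute az Aᴴ) : Commute A P := by
  have h := congrArg conjTranspose (eigenprojection_mul_mul_of_commute hP2 hPrange hA')
  simp only [conjTranspose_mul, conjTranspose_conjTranspose, hPH, ← mul_assoc] at h
  rw [Commute, SemiconjBy, ← eigenprojection_mul_mul_of_commute hP2 hPrange hA, h]

theorem norm_lt_one_of_hasEigen_inv_smul_sub (hlam0 : lam ≠ 0)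
    (hdom : ∀ μ : ℂ, HasEigen az μ → μ ≠ lam → ‖μ‖ < ‖lam‖) (hP2 : P * P = P)
    (hPrange : ∀ v : Fin d → ℂ, az *ᵥ v = lam • v ↔ P *ᵥ v = v) (hPaz : P * az = lam • P)
    {μ : ℂ} (hμ : HasEigen (lam⁻¹ • az - P) μ) : ‖μ‖ < 1 := by
  obtain ⟨w, hw0, hw⟩ := hμ
  rcases eq_or_ne μ 0 with rfl | hμ0
  · simp
  have hPw : P *ᵥ w = 0 := by
    have h := congrArg (P *ᵥ ·) hw
    simp only [mulVec_mulVec, mul_sub, mul_smul_comm, hPaz, smul_smul, inv_mul_cancel₀ hlam0,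
      one_smul, hP2, sub_self, zero_mulVec, mulVec_smul] at h
    exact (smul_eq_zero.mp h.symm).resolve_left hμ0
  have hazw : az *ᵥ w = (lam * μ) • w := by
    rw [sub_mulVec, hPw, sub_zero, smul_mulVec] at hw
    rw [mul_smul, ← hw, smul_smul, mul_inv_cancel₀ hlam0, one_smul]
  have hne : lam * μ ≠ lam := fun h => by
    rw [h] at hazw
    exact hw0 (by rw [← (hPrange w).mp hazw, hPw])
  simpa [norm_mul, norm_pos_iff.mpr hlam0] using hdom _ ⟨w, hw0, hazw⟩ hne

theorem tendsto_inv_pow_smul_pow (hnormal : IsStarNormal az) (hlam0 : lam ≠ 0)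
    (hdom : ∀ μ : ℂ, HasEigen az μ → μ ≠ lam → ‖μ‖ < ‖lam‖) (hPH : Pᴴ = P) (hP2 : P * P = P)
    (hPrange : ∀ v : Fin d → ℂ, az *ᵥ v = lam • v ↔ P *ᵥ v = v) :
    Tendsto (fun m : ℕ => (lam ^ m)⁻¹ • az ^ m) atTop (𝓝 P) := by
  have hPaz := eigenprojection_mul hnormal hPH hP2 hPrange
  set R := lam⁻¹ • az - P
  have hPR : P * R = 0 := by
    rw [mul_sub, mul_smul_comm, hPaz, smul_smul, inv_mul_cancel₀ hlam0, one_smul, hP2, sub_self]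
  have hRP : R * P = 0 := by
    rw [sub_mul, smul_mul_assoc, mul_eigenprojection hP2 hPrange, smul_smul,
      inv_mul_cancel₀ hlam0, one_smul, hP2, sub_self]
  have hR : Tendsto (fun m : ℕ => R ^ m) atTop (𝓝 0) := R.tendsto_pow_atTop_nhds_zero_of_hasEigen
    fun _ => norm_lt_one_of_hasEigen_inv_smul_sub hlam0 hdom hP2 hPrange hPaz
  have hPR_lim : Tendsto (fun m : ℕ => P + R ^ m) atTop (𝓝 P) := by
    simpa using tendsto_const_nhds.add hR
  refine hPR_lim.congr' ?_
  filter_upwards [eventually_ne_atTop 0] with m hm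
  rw [← inv_pow, ← smul_pow, ← add_pow_eq_add_pow_of_mul_eq_zero hP2 hPR hRP hm, add_sub_cancel]

end Eigenprojection

theorem UΘ_eq_sub (Θ : ℝ) :
    UΘ Θ = (Real.cos (Θ / 2) : ℂ) • σx - (Real.sin (Θ / 2) : ℂ) • σy := by
  ext i j
  fin_cases i <;> fin_cases j <;> simp [UΘ, σx, σy, σz, Matrix.mul_apply, Fin.sum_univ_two] <;> ring

theorem UΘ_ne_zero (Θ : ℝ) : UΘ Θ ≠ 0 := by
  intro h
  have h01 : UΘ Θ 0 1 = Complex.exp ((Θ / 2 : ℝ) * Complex.I) := by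
    rw [Complex.exp_mul_I, UΘ_eq_sub]
    simp [σx, σy]
  exact Complex.exp_ne_zero _ (by rw [← h01, h]; rfl)

theorem renormalized_measurement_convergence_general {d : ℕ}
    (az P U ax : Matrix (Fin d) (Fin d) ℂ) (lam : ℂ)
    (hnormal : IsStarNormal az)
    (hlam0 : lam ≠ 0)
    (hdom : ∀ μ : ℂ, HasEigen az μ → μ ≠ lam → ‖μ‖ < ‖lam‖)
    (hP2 : P * P = P) (hPH : Pᴴ = P) (hrank : P.rank = 1)
    (hPrange : ∀ v : Fin d → ℂ, az.mulVec v = lam • v ↔ P.mulVec v = v)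
    (hU : Uᴴ * U = 1)
    (hUaz : U * az * Uᴴ = az)
    (hax : P * ax * P ≠ 0)
    (ay : Matrix (Fin d) (Fin d) ℂ) (hay : ay = U * ax * Uᴴ)
    (Θ : ℝ) :
    Tendsto (fun m : ℕ => (lam ^ (2 * m))⁻¹ •
        ((Real.cos (Θ / 2) : ℂ) • (σx ⊗ₖ (az ^ m * ax * az ^ m))
          - (Real.sin (Θ / 2) : ℂ) • (σy ⊗ₖ (az ^ m * ay * az ^ m))))
      atTop (nhds (UΘ Θ ⊗ₖ (P * ax * P)))
    ∧ UΘ Θ ⊗ₖ (P * ax * P) ≠ 0 := by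
  obtain ⟨hazU, hazUH⟩ := commute_of_mul_mul_eq hU hUaz
  have hUP : Commute U P := commute_eigenprojection hPH hP2 hPrange hazU hazUH
  have hUHP : Commute Uᴴ P :=
    commute_eigenprojection hPH hP2 hPrange hazUH (by rwa [conjTranspose_conjTranspose])
  obtain ⟨β, hβ⟩ := exists_mul_mul_eq_smul_of_rank_eq_one_s5 hrank ax
  have hPay : P * ay * P = P * ax * P :=
    hay ▸ mul_conj_mul_eq_of_commute hβ hUP hUHP (mul_eq_one_comm.mp hU)
  have hlim := tendsto_inv_pow_smul_pow hnormal hlam0 hdom hPH hP2 hPrange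
  have hkron (σ : Matrix (Fin 2) (Fin 2) ℂ) (X : Matrix (Fin d) (Fin d) ℂ) :
      Tendsto (fun m : ℕ => σ ⊗ₖ ((lam ^ (2 * m))⁻¹ • (az ^ m * X * az ^ m))) atTop
        (𝓝 (σ ⊗ₖ (P * X * P))) :=
    ((continuous_const.matrix_kronecker continuous_id).tendsto _).comp
      (tendsto_inv_pow_two_mul_smul_pow_mul_mul_pow hlim X)
  refine ⟨?_, kronecker_ne_zero (UΘ_ne_zero Θ) hax⟩
  rw [UΘ_eq_sub, sub_kronecker, smul_kronecker, smul_kronecker]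
  nth_rw 2 [← hPay]
  refine (((hkron σx ax).const_smul _).sub ((hkron σy ay).const_smul _)).congr fun m => ?_
  simp only [kronecker_smul, smul_sub, smul_comm (lam ^ (2 * m))⁻¹]

/-- The renormalized measurement operator
    `lam⁻²ᵐ·[cos(Θ/2)·(σ_x ⊗ azᵐ ax azᵐ) − sin(Θ/2)·(σ_y ⊗ azᵐ ay azᵐ)]`
    converges to the nonzero product operator `U_Θ ⊗ (P·ax·P)`. -/
theorem renormalized_measurement_convergence {d : ℕ}
    (az P U ax : Matrix (Fin d) (Fin d) ℂ) (lam : ℂ)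
    (hnormal : IsStarNormal az)
    (hlam0 : lam ≠ 0) (hlam : HasEigen az lam)
    (hdom : ∀ μ : ℂ, HasEigen az μ → μ ≠ lam → ‖μ‖ < ‖lam‖)
    (hP2 : P * P = P) (hPH : Pᴴ = P) (hrank : P.rank = 1)
    (hPrange : ∀ v : Fin d → ℂ, az.mulVec v = lam • v ↔ P.mulVec v = v)
    (hU : Uᴴ * U = 1) (hU' : U * Uᴴ = 1)
    (hUaz : U * az * Uᴴ = az)
    (hax : P * ax * P ≠ 0)
    (ay : Matrix (Fin d) (Fin d) ℂ) (hay : ay = U * ax * Uᴴ)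
    (Θ : ℝ) :
    Tendsto (fun m : ℕ => (lam ^ (2 * m))⁻¹ •
        ((Real.cos (Θ / 2) : ℂ) • (σx ⊗ₖ (az ^ m * ax * az ^ m))
          - (Real.sin (Θ / 2) : ℂ) • (σy ⊗ₖ (az ^ m * ay * az ^ m))))
      atTop (nhds (UΘ Θ ⊗ₖ (P * ax * P)))
    ∧ UΘ Θ ⊗ₖ (P * ax * P) ≠ 0 :=
  renormalized_measurement_convergence_general az P U ax lam hnormal hlam0 hdom hP2 hPH hrank
    hPrange hU hUaz hax ay hay Θ

end
end
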